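/- Let A be a unital associative algebra over a field k with dim A ≥ 2, let X ⊆ k, and let p, q ∈ k. Define, for u, v ∈ X, the k-linear map R(u,v) : A ⊗ A → A ⊗ A by R(u,v)(a ⊗ b) = p(u−v) 1 ⊗ ab + q(u−v) ab ⊗ 1 − (pu − qv) b ⊗ a. Then R satisfies the colored quantum Yang–Baxter equation: R¹²(u,v) ∘ R¹³(u,w) ∘ R²³(v,w) = R²³(v,w) ∘ R¹³(u,w) ∘ R¹²(u,v) for all u, v, w ∈ X. -/

import Mathlib

open TensorProduct

/-- The twist map `τ : V ⊗ V → V ⊗ V`, `v ⊗ w ↦ w ⊗ v`. -/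
noncomputable def twist (k V : Type*) [Field k] [AddCommGroup V] [Module k V] :
    V ⊗[k] V →ₗ[k] V ⊗[k] V := (TensorProduct.comm k V V).toLinearMap

/-- `R¹² = R ⊗ I` acting on `(V ⊗ V) ⊗ V`. -/
noncomputable def r12 {k V : Type*} [Field k] [AddCommGroup V] [Module k V]
    (R : V ⊗[k] V →ₗ[k] V ⊗[k] V) :
    (V ⊗[k] V) ⊗[k] V →ₗ[k] (V ⊗[k] V) ⊗[k] V :=
  TensorProduct.map R LinearMap.id

/-- `R²³ = I ⊗ R` acting on `(V ⊗ V) ⊗ V`. -/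
noncomputable def r23 {k V : Type*} [Field k] [AddCommGroup V] [Module k V]
    (R : V ⊗[k] V →ₗ[k] V ⊗[k] V) :
    (V ⊗[k] V) ⊗[k] V →ₗ[k] (V ⊗[k] V) ⊗[k] V :=
  (TensorProduct.assoc k V V V).symm.toLinearMap ∘ₗ
    TensorProduct.map LinearMap.id R ∘ₗ (TensorProduct.assoc k V V V).toLinearMap

/-- `I ⊗ τ` acting on `(V ⊗ V) ⊗ V`. -/
noncomputable def iTauI (k V : Type*) [Field k] [AddCommGroup V] [Module k V] :
    (V ⊗[k] V) ⊗[k] V →ₗ[k] (V ⊗[k] V) ⊗[k] V :=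
  (TensorProduct.assoc k V V V).symm.toLinearMap ∘ₗ
    TensorProduct.map LinearMap.id (twist k V) ∘ₗ (TensorProduct.assoc k V V V).toLinearMap

/-- `R¹³ = (I ⊗ τ)(R ⊗ I)(I ⊗ τ)` acting on `(V ⊗ V) ⊗ V`. -/
noncomputable def r13 {k V : Type*} [Field k] [AddCommGroup V] [Module k V]
    (R : V ⊗[k] V →ₗ[k] V ⊗[k] V) :
    (V ⊗[k] V) ⊗[k] V →ₗ[k] (V ⊗[k] V) ⊗[k] V :=
  iTauI k V ∘ₗ r12 R ∘ₗ iTauI k V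

/-- The colored operator `R(u,v) : A ⊗ A → A ⊗ A`,
`a ⊗ b ↦ p(u−v) 1 ⊗ ab + q(u−v) ab ⊗ 1 − (pu − qv) b ⊗ a`. -/
noncomputable def Rcol (k A : Type*) [Field k] [Ring A] [Algebra k A] (p q u v : k) :
    A ⊗[k] A →ₗ[k] A ⊗[k] A :=
  (p * (u - v)) • ((TensorProduct.mk k A A 1) ∘ₗ LinearMap.mul' k A) +
    (q * (u - v)) • (((TensorProduct.mk k A A).flip 1) ∘ₗ LinearMap.mul' k A) -
    (p * u - q * v) • twist k A

/-!
Every map involved is linear, so it suffices to compare the two sides on `(a ⊗ b) ⊗ c`.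
There, using associativity of `A`, each side expands into a `k`-linear combination of the
same tensors `x ⊗ y ⊗ z` with `x, y, z` products of `1, a, b, c`, and the coefficients,
polynomials in `p, q, u, v, w`, agree.
-/

section TensorLegs

variable {k V : Type*} [Field k] [AddCommGroup V] [Module k V]

@[simp]
theorem iTauI_tmul (a b c : V) : iTauI k V ((a ⊗ₜ b) ⊗ₜ c) = (a ⊗ₜ c) ⊗ₜ b := rfl

@[simp]
theorem r12_tmul (R : V ⊗[k] V →ₗ[k] V ⊗[k] V) (x : V ⊗[k] V) (c : V) :
    r12 R (x ⊗ₜ c) = R x ⊗ₜ c := rfl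

@[simp]
theorem r23_tmul (R : V ⊗[k] V →ₗ[k] V ⊗[k] V) (a b c : V) :
    r23 R ((a ⊗ₜ b) ⊗ₜ c) = (TensorProduct.assoc k V V V).symm (a ⊗ₜ R (b ⊗ₜ c)) := rfl

@[simp]
theorem r13_tmul (R : V ⊗[k] V →ₗ[k] V ⊗[k] V) (a b c : V) :
    r13 R ((a ⊗ₜ b) ⊗ₜ c) = iTauI k V (R (a ⊗ₜ c) ⊗ₜ b) := rfl

end TensorLegs

@[simp]
theorem Rcol_tmul {k A : Type*} [Field k] [Ring A] [Algebra k A] (p q u v : k) (a b : A) :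
    Rcol k A p q u v (a ⊗ₜ b) =
      (p * (u - v)) • ((1 : A) ⊗ₜ (a * b)) + (q * (u - v)) • ((a * b) ⊗ₜ (1 : A)) -
        (p * u - q * v) • (b ⊗ₜ a) := rfl

theorem Rcol_colored_qybe_general {k A : Type*} [Field k] [Ring A] [Algebra k A]
    (X : Set k) (p q : k) :
    ∀ u v w : k, u ∈ X → v ∈ X → w ∈ X →
      r12 (Rcol k A p q u v) ∘ₗ r13 (Rcol k A p q u w) ∘ₗ r23 (Rcol k A p q v w) =
        r23 (Rcol k A p q v w) ∘ₗ r13 (Rcol k A p q u w) ∘ₗ r12 (Rcol k A p q u v) := by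
  intro u v w _ _ _
  refine TensorProduct.ext_threefold fun a b c => ?_
  simp only [LinearMap.comp_apply, r12_tmul, r13_tmul, r23_tmul, Rcol_tmul, iTauI_tmul,
    TensorProduct.assoc_symm_tmul, map_add, map_sub, map_smul,
    TensorProduct.tmul_add, TensorProduct.tmul_sub, TensorProduct.add_tmul,
    TensorProduct.sub_tmul, TensorProduct.tmul_smul, ← TensorProduct.smul_tmul',
    one_mul, mul_one, mul_assoc]
  module

/-- **Theorem (Nichita–Parashar).** For a unital associative `k`-algebra `A` with
`dim A ≥ 2`, `X ⊆ k` and `p, q ∈ k`, the function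
`R(u,v)(a ⊗ b) = p(u−v) 1 ⊗ ab + q(u−v) ab ⊗ 1 − (pu − qv) b ⊗ a`
satisfies the colored quantum Yang–Baxter equation. -/
theorem Rcol_colored_qybe {k A : Type*} [Field k] [Ring A] [Algebra k A]
    (hdim : 2 ≤ Module.rank k A) (X : Set k) (p q : k) :
    ∀ u v w : k, u ∈ X → v ∈ X → w ∈ X →
      r12 (Rcol k A p q u v) ∘ₗ r13 (Rcol k A p q u w) ∘ₗ r23 (Rcol k A p q v w) =
        r23 (Rcol k A p q v w) ∘ₗ r13 (Rcol k A p q u w) ∘ₗ r12 (Rcol k A p q u v) :=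
  Rcol_colored_qybe_general X p q
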